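/- The set of exponents p > 0 for which a metric space (X,d) satisfies the generalized roundness inequality is an interval containing its infimum behavior: if the inequality holds for exponent q then it holds for every p with 0 < p ≤ q. -/

import Mathlib

/-!
For `p > 0` the roundness inequality with exponent `p` says exactly that `d ^ p` is a kernel of
negative type: weights `1` on the `a`'s and `-1` on the `b`'s give one direction; conversely integer
weights are realised by repeating points, and real weights follow by scaling and density.

Schoenberg: if `ψ ≥ 0` is of negative type, so is `ψ ^ α` for `0 < α ≤ 1`. For every `s ≥ 0` the
matrix `exp (-s ψ (xᵢ, xⱼ))` is positive semidefinite, because `ψ (x, z) + ψ (y, z) - ψ (x, y)` is,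
and entrywise exponentials of positive semidefinite matrices remain so by the Schur product
theorem. The identity `t ^ α = C⁻¹ ∫₀^∞ (1 - exp (-s t)) s ^ (-α - 1) ds` then writes `ψ ^ α` as a
positive mixture of the kernels `1 - exp (-s ψ)`. Take `ψ = d ^ q` and `α = p / q`.
-/

/-- A kernel of negative type on `X`. -/
def IsNegTypeKernel {X : Type*} (ψ : X → X → ℝ) : Prop :=
  (∀ x, ψ x x = 0) ∧ (∀ x y, ψ x y = ψ y x) ∧
    ∀ (n : ℕ) (x : Fin n → X) (lam : Fin n → ℝ), (∑ i, lam i = 0) →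
      ∑ i : Fin n, ∑ j : Fin n, lam i * lam j * ψ (x i) (x j) ≤ 0

/-- The generalized roundness inequality for exponent `p` on a metric space `X`. -/
def GRIneq (X : Type*) [MetricSpace X] (p : ℝ) : Prop :=
  ∀ (n : ℕ), 2 ≤ n → ∀ a b : Fin n → X,
    ∑ q ∈ Finset.univ.filter (fun q : Fin n × Fin n => q.1 < q.2),
        (dist (a q.1) (a q.2) ^ p + dist (b q.1) (b q.2) ^ p)
      ≤ ∑ i : Fin n, ∑ j : Fin n, dist (a i) (b j) ^ p

open Finset Matrix MeasureTheory Real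

theorem Finset.two_mul_sum_filter_lt {ι : Type*} [Fintype ι] [LinearOrder ι]
    {g : ι → ι → ℝ} (hsymm : ∀ i j, g i j = g j i) (hdiag : ∀ i, g i i = 0) :
    2 * ∑ q ∈ univ.filter (fun q : ι × ι => q.1 < q.2), g q.1 q.2 = ∑ i, ∑ j, g i j := by
  have hsplit : ∀ i j, g i j = (if i < j then g i j else 0) + if j < i then g j i else 0 := by
    intro i j
    rcases lt_trichotomy i j with h | rfl | h
    · simp [h, h.not_gt]
    · simp [hdiag]
    · simp [h, h.not_gt, hsymm i j]
  rw [sum_filter, Fintype.sum_prod_type, two_mul]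
  conv_rhs => enter [2, i, 2, j]; rw [hsplit]
  simp only [sum_add_distrib]
  rw [sum_comm (f := fun i j => if j < i then g j i else 0)]

theorem Equiv.sum_sum_comp {ι ι' κ κ' : Type*} [Fintype ι] [Fintype ι'] [Fintype κ]
    [Fintype κ'] (e : ι' ≃ ι) (e' : κ' ≃ κ) (f : ι → κ → ℝ) :
    ∑ i, ∑ j, f (e i) (e' j) = ∑ i, ∑ j, f i j := by
  simp only [← Fintype.sum_prod_type']
  exact (e.prodCongr e').sum_comp (fun q => f q.1 q.2)

theorem Finset.sum_sum_sub_mul_sub_mul {ι : Type*} [Fintype ι] {K : ι → ι → ℝ}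
    (hK : ∀ i j, K i j = K j i) (u v : ι → ℝ) :
    ∑ i, ∑ j, (u i - v i) * (u j - v j) * K i j
      = ∑ i, ∑ j, u i * u j * K i j + ∑ i, ∑ j, v i * v j * K i j
        - 2 * ∑ i, ∑ j, u i * v j * K i j := by
  have hswap : ∑ i, ∑ j, v i * u j * K i j = ∑ i, ∑ j, u i * v j * K i j := by
    rw [sum_comm]; simp only [hK _ (_ : ι), mul_comm (v _)]
  simp only [sub_mul, mul_sub, sum_sub_distrib, hswap]
  ring

theorem exists_pos_nat_mul_eq_intCast {ι : Type*} [Fintype ι] (r : ι → ℚ) :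
    ∃ D : ℕ, 0 < D ∧ ∃ m : ι → ℤ, ∀ i, (m i : ℚ) = D * r i := by
  refine ⟨∏ i, (r i).den, prod_pos fun i _ => (r i).den_pos,
    fun i => ((∏ j, (r j).den) / (r i).den : ℕ) * (r i).num, fun i => ?_⟩
  have hdvd : (r i).den ∣ ∏ j, (r j).den := dvd_prod_of_mem _ (mem_univ i)
  rw [Int.cast_mul, Int.cast_natCast, Nat.cast_div hdvd (Nat.cast_ne_zero.2 (r i).den_nz),
    div_mul_eq_mul_div, mul_div_assoc, Rat.num_div_den]

theorem sum_sum_mul_nonpos_of_ratCast {ι : Type*} [Fintype ι] {K : ι → ι → ℝ}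
    (hK : ∀ m : ι → ℤ, ∑ i, m i = 0 → ∑ i, ∑ j, (m i : ℝ) * m j * K i j ≤ 0)
    {r : ι → ℚ} (hr : ∑ i, r i = 0) : ∑ i, ∑ j, (r i : ℝ) * r j * K i j ≤ 0 := by
  obtain ⟨D, hD, m, hm⟩ := exists_pos_nat_mul_eq_intCast r
  have hmR : ∀ i, (m i : ℝ) = D * r i := fun i => by exact_mod_cast hm i
  have hmsum : ∑ i, m i = 0 := by
    have : ∑ i, (m i : ℚ) = 0 := by simp [hm, ← mul_sum, hr]
    exact_mod_cast this
  have hscale : ∑ i, ∑ j, (m i : ℝ) * m j * K i j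
      = (D : ℝ) ^ 2 * ∑ i, ∑ j, (r i : ℝ) * r j * K i j := by
    simp only [hmR, mul_sum]
    ring_nf
  have := hK m hmsum
  rw [hscale] at this
  exact nonpos_of_mul_nonpos_right this (by positivity)

theorem sum_sum_mul_nonpos_of_intCast {ι : Type*} [Fintype ι] {K : ι → ι → ℝ}
    (hK : ∀ m : ι → ℤ, ∑ i, m i = 0 → ∑ i, ∑ j, (m i : ℝ) * m j * K i j ≤ 0)
    {c : ι → ℝ} (hc : ∑ i, c i = 0) : ∑ i, ∑ j, c i * c j * K i j ≤ 0 := by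
  -- Centering fixes the hyperplane `∑ c = 0` and maps rational vectors to rational points of it.
  let center : (ι → ℝ) → ι → ℝ := fun μ i => μ i - (∑ j, μ j) / Fintype.card ι
  have hcenter : ∀ μ, ∑ i, ∑ j, center μ i * center μ j * K i j ≤ 0 := by
    intro μ
    refine (DenseRange.piMap fun _ => Rat.denseRange_cast).induction_on μ
      (isClosed_le (by fun_prop) continuous_const) fun r => ?_
    let r₀ : ι → ℚ := fun i => r i - (∑ j, r j) / Fintype.card ι
    have hr₀ : ∑ i, r₀ i = 0 := by
      rcases isEmpty_or_nonempty ι with hι | hι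
      · simp
      · simp [r₀, sum_sub_distrib, mul_div_cancel₀]
    convert sum_sum_mul_nonpos_of_ratCast hK hr₀ using 5 <;> simp [center, r₀]
  have : center c = c := by simp [center, hc]
  simpa [this] using hcenter c

namespace Matrix

variable {ι : Type*} [Fintype ι]

theorem dotProduct_mulVec_eq_sum_sum (M : Matrix ι ι ℝ) (c : ι → ℝ) :
    c ⬝ᵥ M *ᵥ c = ∑ i, ∑ j, c i * c j * M i j := by
  simp only [dotProduct, mulVec, mul_sum]
  exact sum_congr rfl fun i _ => sum_congr rfl fun j _ => by ring

theorem PosSemidef.map_pow {A : Matrix ι ι ℝ} (hA : A.PosSemidef) (k : ℕ) :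
    (A.map (· ^ k)).PosSemidef := by
  induction k with
  | zero =>
    have : A.map (· ^ 0) = vecMulVec 1 (star 1) := by ext; simp [vecMulVec_apply]
    rw [this]
    exact posSemidef_vecMulVec_self_star 1
  | succ k ih =>
    have : A.map (· ^ (k + 1)) = A.map (· ^ k) ⊙ A := by ext; simp [pow_succ]
    rw [this]
    exact ih.hadamard hA

theorem isClosed_setOf_posSemidef : IsClosed {A : Matrix ι ι ℝ | A.PosSemidef} := by
  simp only [posSemidef_iff_dotProduct_mulVec, Set.ofPred_and, Set.ofPred_forall]
  exact (isClosed_eq continuous_id.matrix_conjTranspose continuous_id).inter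
    (isClosed_iInter fun x => isClosed_le continuous_const
      (continuous_const.dotProduct (continuous_id.matrix_mulVec continuous_const)))

theorem PosSemidef.map_exp {A : Matrix ι ι ℝ} (hA : A.PosSemidef) :
    (A.map Real.exp).PosSemidef := by
  have hsum : HasSum (fun k => (k.factorial⁻¹ : ℝ) • A.map (· ^ k)) (A.map Real.exp) :=
    Pi.hasSum.2 fun i => Pi.hasSum.2 fun j => by
      simpa [Real.exp_eq_exp_ℝ] using NormedSpace.exp_series_hasSum_exp' (𝕂 := ℝ) (A i j)
  refine isClosed_setOf_posSemidef.mem_of_tendsto hsum.tendsto_sum_nat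
    (Filter.Eventually.of_forall fun N => ?_)
  exact posSemidef_sum _ fun k _ => (hA.map_pow k).smul (by positivity)

end Matrix

section RpowIntegral

variable {α : ℝ}

theorem integrableOn_one_sub_exp_neg_mul_rpow (h0 : 0 < α) (h1 : α < 1) {t : ℝ} (ht : 0 ≤ t) :
    IntegrableOn (fun s => (1 - exp (-(s * t))) * s ^ (-α - 1)) (Set.Ioi 0) := by
  have hmeas : AEStronglyMeasurable (fun s : ℝ => (1 - exp (-(s * t))) * s ^ (-α - 1)) :=
    (by fun_prop : Measurable fun s : ℝ => (1 - exp (-(s * t))) * s ^ (-α - 1))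
      |>.aestronglyMeasurable
  have hnorm : ∀ s ∈ Set.Ioi (0 : ℝ), ‖(1 - exp (-(s * t))) * s ^ (-α - 1)‖
      = (1 - exp (-(s * t))) * s ^ (-α - 1) := fun s hs =>
    Real.norm_of_nonneg (mul_nonneg (sub_nonneg.2 (exp_le_one_iff.2 (by nlinarith [hs.out])))
      (rpow_nonneg (le_of_lt hs) _))
  rw [← Set.Ioc_union_Ioi_eq_Ioi zero_le_one]
  refine IntegrableOn.union ?_ ?_
  · have hint : IntegrableOn (fun s : ℝ => t * s ^ (-α)) (Set.Ioc 0 1) :=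
      ((intervalIntegrable_iff_integrableOn_Ioc_of_le zero_le_one).1
        (intervalIntegral.intervalIntegrable_rpow' (r := -α) (by linarith))).const_mul t
    refine hint.mono' hmeas.restrict ((ae_restrict_iff' measurableSet_Ioc).2 (ae_of_all _ ?_))
    intro s hs
    rw [hnorm s hs.1]
    calc (1 - exp (-(s * t))) * s ^ (-α - 1) ≤ (s * t) * s ^ (-α - 1) := by
          gcongr
          · exact rpow_nonneg hs.1.le _
          · linarith [add_one_le_exp (-(s * t))]
      _ = t * s ^ (-α) := by
          rw [mul_comm s t, mul_assoc, mul_comm s, ← rpow_add_one hs.1.ne', sub_add_cancel]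
  · refine (integrableOn_Ioi_rpow_of_lt (a := -α - 1) (by linarith) zero_lt_one).mono'
      hmeas.restrict ((ae_restrict_iff' measurableSet_Ioi).2 (ae_of_all _ fun s hs => ?_))
    have hs0 : (0 : ℝ) < s := zero_lt_one.trans hs
    rw [hnorm s hs0]
    calc (1 - exp (-(s * t))) * s ^ (-α - 1) ≤ 1 * s ^ (-α - 1) := by
          gcongr
          linarith [exp_pos (-(s * t))]
      _ = s ^ (-α - 1) := one_mul _

theorem integral_one_sub_exp_neg_mul_rpow (h0 : 0 < α) {t : ℝ} (ht : 0 ≤ t) :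
    ∫ s in Set.Ioi 0, (1 - exp (-(s * t))) * s ^ (-α - 1)
      = t ^ α * ∫ s in Set.Ioi 0, (1 - exp (-s)) * s ^ (-α - 1) := by
  rcases ht.eq_or_lt with rfl | ht
  · simp [zero_rpow h0.ne']
  have hscale : ∀ s ∈ Set.Ioi (0 : ℝ), (1 - exp (-(s * t))) * s ^ (-α - 1)
      = t ^ (α + 1) * ((1 - exp (-(t * s))) * (t * s) ^ (-α - 1)) := fun s hs => by
    rw [mul_rpow ht.le (le_of_lt hs), mul_comm s t]
    have : t ^ (α + 1) * t ^ (-α - 1) = 1 := by rw [← rpow_add ht]; simp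
    linear_combination (-(1 - exp (-(t * s))) * s ^ (-α - 1)) * this
  rw [setIntegral_congr_fun measurableSet_Ioi hscale, integral_const_mul,
    integral_comp_mul_left_Ioi (fun s => (1 - exp (-s)) * s ^ (-α - 1)) 0 ht, mul_zero,
    smul_eq_mul, rpow_add_one ht.ne', mul_assoc, mul_inv_cancel_left₀ ht.ne']

theorem integral_one_sub_exp_neg_rpow_pos (h0 : 0 < α) (h1 : α < 1) :
    0 < ∫ s in Set.Ioi 0, (1 - exp (-s)) * s ^ (-α - 1) := by
  have hint := integrableOn_one_sub_exp_neg_mul_rpow h0 h1 zero_le_one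
  simp only [mul_one] at hint
  have hpos : ∀ s ∈ Set.Ioi (0 : ℝ), 0 < (1 - exp (-s)) * s ^ (-α - 1) := fun s hs =>
    mul_pos (by linarith [exp_lt_one_iff.2 (neg_lt_zero.2 hs)]) (rpow_pos_of_pos hs _)
  have hsupp :
      Function.support (fun s : ℝ => (1 - exp (-s)) * s ^ (-α - 1)) ∩ Set.Ioi 0 = Set.Ioi 0 :=
    Set.inter_eq_right.2 fun s hs => (hpos s hs).ne'
  rw [setIntegral_pos_iff_support_of_nonneg_ae
    ((ae_restrict_iff' measurableSet_Ioi).2 (ae_of_all _ fun s hs => (hpos s hs).le)) hint, hsupp]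
  simp

end RpowIntegral

namespace IsNegTypeKernel

variable {X : Type*} {ψ : X → X → ℝ}

theorem sum_sum_mul_nonpos (hψ : IsNegTypeKernel ψ) {ι : Type*} [Fintype ι] (x : ι → X)
    {c : ι → ℝ} (hc : ∑ i, c i = 0) : ∑ i, ∑ j, c i * c j * ψ (x i) (x j) ≤ 0 := by
  let e := (Fintype.equivFin ι).symm
  have := hψ.2.2 _ (x ∘ e) (c ∘ e) (by rw [← hc]; exact e.sum_comp c)
  simpa only [Function.comp_apply, e.sum_comp (fun i => ∑ j, c i * c j * ψ (x i) (x j)),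
    fun i => e.sum_comp (fun j => c i * c j * ψ (x i) (x j))] using this

theorem sum_sum_add_sum_sum_le (hψ : IsNegTypeKernel ψ) {ι : Type*} [Fintype ι]
    (a b : ι → X) :
    ∑ i, ∑ j, ψ (a i) (a j) + ∑ i, ∑ j, ψ (b i) (b j) ≤ 2 * ∑ i, ∑ j, ψ (a i) (b j) := by
  have h := hψ.sum_sum_mul_nonpos (Sum.elim a b) (c := Sum.elim 1 (-1)) (by simp)
  have hswap : ∑ i, ∑ j, ψ (b i) (a j) = ∑ i, ∑ j, ψ (a i) (b j) := by
    rw [sum_comm]; simp only [hψ.2.1 (b _)]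
  simp only [Fintype.sum_sum_type, Sum.elim_inl, Sum.elim_inr, Pi.one_apply, Pi.neg_apply,
    one_mul, mul_one, neg_mul, mul_neg, sum_add_distrib, sum_neg_distrib] at h
  linarith

theorem posSemidef_gromovProduct (hψ : IsNegTypeKernel ψ) {ι : Type*} [Fintype ι] (x : ι → X)
    (z : X) : (of fun i j => ψ (x i) z + ψ (x j) z - ψ (x i) (x j)).PosSemidef := by
  have hdiag := hψ.1
  have hsymm := hψ.2.1
  refine PosSemidef.of_dotProduct_mulVec_nonneg (IsHermitian.ext fun i j => ?_) fun c => ?_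
  · simp [hsymm (x i) (x j)]; ring
  set S := ∑ i, c i
  set T := ∑ i, c i * ψ (x i) z
  -- negative type at the points `z, x₁, …` with the weights `-∑ c, c₁, …`
  have h := hψ.sum_sum_mul_nonpos (fun o : Option ι => o.elim z x)
    (c := fun o : Option ι => o.elim (-S) c) (by simp [Fintype.sum_option, S])
  have hT₁ : ∑ i, ∑ j, c i * c j * ψ (x i) z = S * T := by
    simp only [T, S, sum_mul, mul_sum]
    exact sum_congr rfl fun i _ => sum_congr rfl fun j _ => by ring
  have hT₂ : ∑ i, ∑ j, c i * c j * ψ (x j) z = T * S := by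
    simp only [T, S, sum_mul, mul_sum]
    exact sum_congr rfl fun i _ => sum_congr rfl fun j _ => by ring
  have hT₃ : ∑ j, -S * c j * ψ z (x j) = -(S * T) := by
    simp only [T, mul_sum, ← sum_neg_distrib, hsymm z]; exact sum_congr rfl fun i _ => by ring
  have hT₄ : ∑ i, c i * -S * ψ (x i) z = -(S * T) := by
    simp only [T, mul_sum, ← sum_neg_distrib]; exact sum_congr rfl fun i _ => by ring
  simp only [Fintype.sum_option, Option.elim, hdiag, mul_zero, zero_add, sum_add_distrib, hT₃,
    hT₄] at h
  rw [star_trivial, dotProduct_mulVec_eq_sum_sum]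
  simp only [of_apply, mul_add, mul_sub, sum_add_distrib, sum_sub_distrib, hT₁, hT₂]
  linarith

theorem posSemidef_exp_neg_mul (hψ : IsNegTypeKernel ψ) {ι : Type*} [Fintype ι] (x : ι → X)
    {s : ℝ} (hs : 0 ≤ s) : (of fun i j => Real.exp (-(s * ψ (x i) (x j)))).PosSemidef := by
  rcases isEmpty_or_nonempty ι with hι | ⟨⟨i₀⟩⟩
  · exact PosSemidef.of_dotProduct_mulVec_nonneg (IsHermitian.ext isEmptyElim) fun c => by simp
  classical
  let z := x i₀
  let D : Matrix ι ι ℝ := diagonal fun i => Real.exp (-(s * ψ (x i) z))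
  -- `exp (-s ψ (xᵢ, xⱼ)) = Dᵢᵢ exp (s Gᵢⱼ) Dⱼⱼ`, `G` the matrix of `posSemidef_gromovProduct`
  have hE := ((hψ.posSemidef_gromovProduct x z).smul hs).map_exp.conjTranspose_mul_mul_same D
  convert hE using 1
  ext i j
  simp only [D, diagonal_conjTranspose, diagonal_mul, mul_diagonal, map_apply, Matrix.smul_apply,
    of_apply, smul_eq_mul, star_trivial]
  rw [← Real.exp_add, ← Real.exp_add]
  ring_nf

theorem one_sub_exp_neg_mul (hψ : IsNegTypeKernel ψ) {s : ℝ} (hs : 0 ≤ s) :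
    IsNegTypeKernel fun x y => 1 - exp (-(s * ψ x y)) := by
  refine ⟨fun x => by simp [hψ.1], fun x y => by simp only [hψ.2.1 x y], fun n x c hc => ?_⟩
  have hE := (hψ.posSemidef_exp_neg_mul x hs).dotProduct_mulVec_nonneg c
  rw [star_trivial, dotProduct_mulVec_eq_sum_sum] at hE
  have hsq : ∑ i, ∑ j, c i * c j = 0 := by rw [← sum_mul_sum, hc, zero_mul]
  simp only [mul_sub, mul_one, sum_sub_distrib, hsq, zero_sub, neg_nonpos]
  simpa using hE

theorem rpow (hψ : IsNegTypeKernel ψ) (hψ₀ : ∀ x y, 0 ≤ ψ x y) {α : ℝ} (h0 : 0 < α)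
    (h1 : α ≤ 1) : IsNegTypeKernel fun x y => ψ x y ^ α := by
  rcases h1.eq_or_lt with rfl | h1
  · simpa using hψ
  refine ⟨fun x => by simp [hψ.1, zero_rpow h0.ne'], fun x y => congrArg (· ^ α) (hψ.2.1 x y),
    fun n x c hc => ?_⟩
  set C := ∫ s in Set.Ioi 0, (1 - exp (-s)) * s ^ (-α - 1)
  have hC : 0 < C := integral_one_sub_exp_neg_rpow_pos h0 h1
  have hint : ∀ i j, IntegrableOn
      (fun s => (1 - exp (-(s * ψ (x i) (x j)))) * s ^ (-α - 1)) (Set.Ioi 0) := fun i j =>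
    integrableOn_one_sub_exp_neg_mul_rpow h0 h1 (hψ₀ (x i) (x j))
  have hrep : ∀ i j, ψ (x i) (x j) ^ α
      = C⁻¹ * ∫ s in Set.Ioi 0, (1 - exp (-(s * ψ (x i) (x j)))) * s ^ (-α - 1) := by
    intro i j
    rw [integral_one_sub_exp_neg_mul_rpow h0 (hψ₀ _ _), mul_comm]
    exact (mul_inv_cancel_right₀ hC.ne' _).symm
  have hpt : ∀ s ∈ Set.Ioi (0 : ℝ),
      ∑ i, ∑ j, c i * c j * ((1 - exp (-(s * ψ (x i) (x j)))) * s ^ (-α - 1)) ≤ 0 := by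
    intro s hs
    have h := (hψ.one_sub_exp_neg_mul hs.out.le).sum_sum_mul_nonpos x hc
    calc _ = (∑ i, ∑ j, c i * c j * (1 - exp (-(s * ψ (x i) (x j))))) * s ^ (-α - 1) := by
          simp only [sum_mul, mul_assoc]
      _ ≤ 0 := mul_nonpos_of_nonpos_of_nonneg h (rpow_nonneg hs.out.le _)
  calc ∑ i, ∑ j, c i * c j * ψ (x i) (x j) ^ α
      = C⁻¹ * ∫ s in Set.Ioi 0,
          ∑ i, ∑ j, c i * c j * ((1 - exp (-(s * ψ (x i) (x j)))) * s ^ (-α - 1)) := by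
        rw [integral_finsetSum _ fun i _ => integrable_finsetSum _ fun j _ =>
          (hint i j).const_mul _]
        simp only [integral_finsetSum _ fun j _ => (hint _ j).const_mul _, integral_const_mul,
          hrep, mul_sum]
        exact sum_congr rfl fun i _ => sum_congr rfl fun j _ => by ring
    _ ≤ 0 := mul_nonpos_of_nonneg_of_nonpos (inv_nonneg.2 hC.le)
        (setIntegral_nonpos measurableSet_Ioi hpt)

theorem of_sum_sum_intCast_mul_nonpos (hdiag : ∀ x, ψ x x = 0) (hsymm : ∀ x y, ψ x y = ψ y x)
    (hint : ∀ (n : ℕ) (x : Fin n → X) (m : Fin n → ℤ), ∑ i, m i = 0 →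
      ∑ i, ∑ j, (m i : ℝ) * m j * ψ (x i) (x j) ≤ 0) : IsNegTypeKernel ψ :=
  ⟨hdiag, hsymm, fun n x _ hc => sum_sum_mul_nonpos_of_intCast (hint n x) hc⟩

end IsNegTypeKernel

theorem grIneq_iff_sum_sum_add_sum_sum_le {X : Type*} [MetricSpace X] {p : ℝ} (hp : 0 < p) :
    GRIneq X p ↔ ∀ n, 2 ≤ n → ∀ a b : Fin n → X,
      ∑ i, ∑ j, dist (a i) (a j) ^ p + ∑ i, ∑ j, dist (b i) (b j) ^ p
        ≤ 2 * ∑ i, ∑ j, dist (a i) (b j) ^ p := by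
  have hpairs : ∀ {n} (a b : Fin n → X),
      2 * ∑ q ∈ univ.filter (fun q : Fin n × Fin n => q.1 < q.2),
        (dist (a q.1) (a q.2) ^ p + dist (b q.1) (b q.2) ^ p)
        = ∑ i, ∑ j, dist (a i) (a j) ^ p + ∑ i, ∑ j, dist (b i) (b j) ^ p := by
    intro n a b
    rw [two_mul_sum_filter_lt (g := fun i j => dist (a i) (a j) ^ p + dist (b i) (b j) ^ p)
      (fun i j => by rw [dist_comm (a i), dist_comm (b i)])
      (fun i => by simp [Real.zero_rpow hp.ne'])]
    simp only [sum_add_distrib]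
  refine forall₄_congr fun n _ a b => ?_
  rw [← hpairs]
  constructor <;> intro h <;> linarith

namespace GRIneq

variable {X : Type*} [MetricSpace X] {p : ℝ}

theorem sum_sum_add_sum_sum_le (h : GRIneq X p) (hp : 0 < p) {ι κ : Type*} [Fintype ι]
    [Fintype κ] (hcard : Fintype.card ι = Fintype.card κ) (a : ι → X) (b : κ → X) :
    ∑ i, ∑ j, dist (a i) (a j) ^ p + ∑ i, ∑ j, dist (b i) (b j) ^ p
      ≤ 2 * ∑ i, ∑ j, dist (a i) (b j) ^ p := by
  let eι := (Fintype.equivFinOfCardEq hcard).symm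
  let eκ := (Fintype.equivFin κ).symm
  suffices h' : ∀ a' b' : Fin (Fintype.card κ) → X,
      ∑ i, ∑ j, dist (a' i) (a' j) ^ p + ∑ i, ∑ j, dist (b' i) (b' j) ^ p
        ≤ 2 * ∑ i, ∑ j, dist (a' i) (b' j) ^ p by
    have := h' (a ∘ eι) (b ∘ eκ)
    simp only [Function.comp_apply] at this
    rwa [Equiv.sum_sum_comp eι eι (fun i j => dist (a i) (a j) ^ p),
      Equiv.sum_sum_comp eκ eκ (fun i j => dist (b i) (b j) ^ p),
      Equiv.sum_sum_comp eι eκ (fun i j => dist (a i) (b j) ^ p)] at this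
  intro a' b'
  rcases lt_or_ge (Fintype.card κ) 2 with hn | hn
  · have : Subsingleton (Fin (Fintype.card κ)) := Fin.subsingleton_iff_le_one.2 (by omega)
    have hzero : ∀ (c : Fin (Fintype.card κ) → X) i j, dist (c i) (c j) ^ p = 0 := by
      intro c i j
      rw [Subsingleton.elim i j, dist_self, Real.zero_rpow hp.ne']
    simp only [hzero a', hzero b', sum_const_zero, add_zero]
    positivity
  · exact (grIneq_iff_sum_sum_add_sum_sum_le hp).1 h _ hn _ _

theorem sum_sum_intCast_mul_nonpos (h : GRIneq X p) (hp : 0 < p) {ι : Type*} [Fintype ι]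
    (x : ι → X) {m : ι → ℤ} (hm : ∑ i, m i = 0) :
    ∑ i, ∑ j, (m i : ℝ) * m j * dist (x i) (x j) ^ p ≤ 0 := by
  -- `m = u - v`; the two families repeat `x i` `u i` and `v i` times respectively
  let u i := (m i).toNat
  let v i := (-m i).toNat
  have hcard : Fintype.card (Σ i, Fin (u i)) = Fintype.card (Σ i, Fin (v i)) := by
    simp only [Fintype.card_sigma, Fintype.card_fin]
    have hsum := hm
    rw [← sum_congr rfl fun i _ => Int.toNat_sub_toNat_neg (m i), sum_sub_distrib] at hsum
    zify
    linarith
  have key := h.sum_sum_add_sum_sum_le hp hcard (fun σ => x σ.1) (fun σ => x σ.1)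
  simp only [Fintype.sum_sigma, sum_const, card_univ, Fintype.card_fin, nsmul_eq_mul, mul_sum,
    ← mul_assoc] at key
  have hm' : ∀ i, (m i : ℝ) = u i - v i := fun i => by
    exact_mod_cast (Int.toNat_sub_toNat_neg (m i)).symm
  simp only [hm']
  rw [sum_sum_sub_mul_sub_mul (fun i j => by rw [dist_comm])]
  simp only [mul_sum, ← mul_assoc]
  linarith

end GRIneq

theorem grIneq_iff_isNegTypeKernel {X : Type*} [MetricSpace X] {p : ℝ} (hp : 0 < p) :
    GRIneq X p ↔ IsNegTypeKernel fun x y : X => dist x y ^ p :=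
  ⟨fun h => .of_sum_sum_intCast_mul_nonpos (fun x => by simp [zero_rpow hp.ne'])
      (fun x y => by rw [dist_comm]) fun _ x _ hm => h.sum_sum_intCast_mul_nonpos hp x hm,
    fun h => (grIneq_iff_sum_sum_add_sum_sum_le hp).2 fun _ _ a b => h.sum_sum_add_sum_sum_le a b⟩

/-- If the generalized roundness inequality holds for exponent q, it holds for every
exponent p with 0 < p ≤ q. -/
theorem gr_interval {X : Type*} [MetricSpace X] (p q : ℝ) (hp : 0 < p) (hpq : p ≤ q)
    (h : GRIneq X q) : GRIneq X p := by
  have hq : 0 < q := hp.trans_le hpq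
  rw [grIneq_iff_isNegTypeKernel hq] at h
  rw [grIneq_iff_isNegTypeKernel hp]
  convert h.rpow (fun _ _ => by positivity) (div_pos hp hq) ((div_le_one hq).2 hpq) using 3 with x y
  rw [← rpow_mul dist_nonneg, mul_div_cancel₀ p hq.ne']
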